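/- arXiv:1510.03416 — 2 statements merged into one kernel-verified Lean document; each statement's English description precedes it below -/
import Mathlib

section
/- For ρ > 0 define Ξ_ρ(s) = ∫₀^∞ t^(s/2 - 1) Ψ(t) exp(-ρ·(log t)²) dt where Ψ(t) = ∑_{n≥1} e^{-πn²t}. Then for all complex s, Ξ_ρ(s) - Ξ_ρ(1-s) = (1/2)·√(π/ρ)·( exp((s-1)²/(16ρ)) - exp(s²/(16ρ)) ). -/
/-!
Substituting `t = eˣ` turns `Ξ_ρ(s)` into `∫ e^{sx/2 - ρx²} Ψ(eˣ) dx` over `ℝ`. The theta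
functional equation `Ψ(e^{-x}) = e^{x/2} Ψ(eˣ) + (e^{x/2} - 1)/2`, applied after `x ↦ -x`, rewrites
`Ξ_ρ(1 - s)` as `Ξ_ρ(s)` plus half the difference of the Gaussian integrals
`∫ e^{cx - ρx²} dx = √(π/ρ) e^{c²/(4ρ)}` at `c = s/2` and `c = (s - 1)/2`. The same functional
equation gives `Ψ(eˣ) = O(1 + e^{-x/2})`, which makes every integral absolutely convergent.
-/

open MeasureTheory Real Filter

noncomputable def Psi (t : ℝ) : ℝ := ∑' n : ℕ, Real.exp (-Real.pi * ((n : ℝ) + 1) ^ 2 * t)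

noncomputable def Xi (ρ : ℝ) (s : ℂ) : ℂ :=
  ∫ t in Set.Ioi (0:ℝ), (t : ℂ) ^ (s / 2 - 1) * (Psi t : ℂ) * (Real.exp (-ρ * Real.log t ^ 2) : ℂ)

open HurwitzZeta Set
open scoped Complex

-- `cosKernel 0 t = ∑_{n ∈ ℤ} e^{-πn²t}` is Mathlib's Jacobi theta function at `it`.
lemma hasSum_psi {t : ℝ} (ht : 0 < t) :
    HasSum (fun n : ℕ ↦ rexp (-π * ((n : ℝ) + 1) ^ 2 * t)) ((cosKernel 0 t - 1) / 2) := by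
  simpa using (hasSum_nat_cosKernel₀ 0 ht).div_const 2

lemma cosKernel_zero_eq_one_add_two_mul_psi {t : ℝ} (ht : 0 < t) :
    cosKernel 0 t = 1 + 2 * Psi t := by
  rw [Psi, (hasSum_psi ht).tsum_eq]
  ring

lemma psi_nonneg (t : ℝ) : 0 ≤ Psi t :=
  tsum_nonneg fun _ ↦ (exp_pos _).le

lemma psi_antitoneOn : AntitoneOn Psi (Ioi 0) := fun a ha b hb hab ↦
  (hasSum_psi hb).summable.tsum_le_tsum
    (fun n ↦ exp_le_exp.mpr <| by
      nlinarith [mul_nonneg (mul_nonneg pi_pos.le (sq_nonneg ((n : ℝ) + 1))) (sub_nonneg.mpr hab)])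
    (hasSum_psi ha).summable

lemma cosKernel_zero_exp_neg (x : ℝ) :
    cosKernel 0 (rexp (-x)) = rexp (x / 2) * cosKernel 0 (rexp x) := by
  have h := evenKernel_functional_equation 0 (rexp (-x))
  have h_sqrt : 1 / rexp (-x) ^ (1 / 2 : ℝ) = rexp (x / 2) := by
    rw [← exp_mul, one_div, ← exp_neg]
    ring_nf
  have h_inv : 1 / rexp (-x) = rexp x := by rw [one_div, ← exp_neg, neg_neg]
  rwa [evenKernel_eq_cosKernel_of_zero, h_sqrt, h_inv] at h

lemma psi_exp_neg (x : ℝ) :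
    Psi (rexp (-x)) = rexp (x / 2) * Psi (rexp x) + (rexp (x / 2) - 1) / 2 := by
  have h := cosKernel_zero_exp_neg x
  rw [cosKernel_zero_eq_one_add_two_mul_psi (exp_pos _),
    cosKernel_zero_eq_one_add_two_mul_psi (exp_pos _)] at h
  linear_combination h / 2

lemma psi_exp_le (x : ℝ) : Psi (rexp x) ≤ (Psi 1 + 1) * (1 + rexp (-x / 2)) := by
  have hψ₁ := psi_nonneg 1
  have hexp := (exp_pos (-x / 2)).le
  rcases le_total 0 x with hx | hx
  · have hψ : Psi (rexp x) ≤ Psi 1 :=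
      psi_antitoneOn (mem_Ioi.mpr one_pos) (exp_pos x) (one_le_exp hx)
    nlinarith
  · have hψ : Psi (rexp (-x)) ≤ Psi 1 :=
      psi_antitoneOn (mem_Ioi.mpr one_pos) (exp_pos _) (one_le_exp (neg_nonneg.mpr hx))
    rw [← neg_neg x, psi_exp_neg (-x), neg_neg]
    nlinarith

lemma continuous_psi_comp_exp : Continuous fun x : ℝ ↦ Psi (rexp x) := by
  have h : (fun x ↦ Psi (rexp x)) = fun x ↦ (cosKernel 0 (rexp x) - 1) / 2 := by
    ext x
    rw [cosKernel_zero_eq_one_add_two_mul_psi (exp_pos x)]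
    ring
  rw [h]
  exact (((continuousOn_cosKernel 0).comp_continuous continuous_exp exp_pos).sub
    continuous_const).div_const 2

lemma integrable_cexp_mul_sub_mul_sq {ρ : ℝ} (hρ : 0 < ρ) (c : ℂ) :
    Integrable fun x : ℝ ↦ cexp (c * x - ρ * x ^ 2) := by
  simpa [sub_eq_neg_add, neg_mul] using
    integrable_cexp_quadratic (b := (ρ : ℂ)) (by simpa using hρ) c 0

lemma integral_cexp_mul_sub_mul_sq {ρ : ℝ} (hρ : 0 < ρ) (c : ℂ) :
    ∫ x : ℝ, cexp (c * x - ρ * x ^ 2) = √(π / ρ) * cexp (c ^ 2 / (4 * ρ)) := by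
  have h := integral_cexp_quadratic (b := -(ρ : ℂ)) (by simpa using hρ) c 0
  simp only [neg_mul, ← sub_eq_neg_add, add_zero, neg_neg, zero_sub, mul_neg, div_neg] at h
  rw [h, sqrt_eq_rpow, Complex.ofReal_cpow (by positivity)]
  push_cast
  ring_nf

lemma norm_cexp_mul_sub_mul_sq_mul_exp (ρ : ℝ) (c : ℂ) (x : ℝ) :
    ‖cexp (c * x - ρ * x ^ 2)‖ * rexp (-x / 2) = ‖cexp ((c - 1 / 2) * x - ρ * x ^ 2)‖ := by
  have h_split : (c - 1 / 2) * x - ρ * x ^ 2 = c * x - ρ * x ^ 2 + ((-x / 2 : ℝ) : ℂ) := by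
    push_cast
    ring
  rw [h_split, Complex.exp_add, norm_mul, ← Complex.ofReal_exp, Complex.norm_real,
    norm_of_nonneg (exp_pos _).le]

lemma integrable_cexp_mul_sub_mul_sq_mul_psi {ρ : ℝ} (hρ : 0 < ρ) (c : ℂ) :
    Integrable fun x : ℝ ↦ cexp (c * x - ρ * x ^ 2) * Psi (rexp x) := by
  refine Integrable.mono' (((integrable_cexp_mul_sub_mul_sq hρ c).norm.add
    (integrable_cexp_mul_sub_mul_sq hρ (c - 1 / 2)).norm).const_mul (Psi 1 + 1))
    ((Continuous.mul (by fun_prop) (Complex.continuous_ofReal.comp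
      continuous_psi_comp_exp)).aestronglyMeasurable) (Eventually.of_forall fun x ↦ ?_)
  rw [Pi.add_apply, norm_mul, Complex.norm_real, norm_of_nonneg (psi_nonneg _),
    ← norm_cexp_mul_sub_mul_sq_mul_exp]
  calc ‖cexp (c * x - ρ * x ^ 2)‖ * Psi (rexp x)
      ≤ ‖cexp (c * x - ρ * x ^ 2)‖ * ((Psi 1 + 1) * (1 + rexp (-x / 2))) := by
        gcongr
        exact psi_exp_le x
    _ = _ := by ring

lemma integral_Ioi_zero_eq_integral_exp_smul {E : Type*} [NormedAddCommGroup E]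
    [NormedSpace ℝ E] (g : ℝ → E) :
    ∫ t in Ioi 0, g t = ∫ x, rexp x • g (rexp x) := by
  rw [← range_exp, ← image_univ,
    integral_image_eq_integral_abs_deriv_smul MeasurableSet.univ
      (fun x _ ↦ (hasDerivAt_exp x).hasDerivWithinAt) exp_injective.injOn g]
  simp [abs_of_pos (exp_pos _)]

lemma Xi_eq_integral (ρ : ℝ) (s : ℂ) :
    Xi ρ s = ∫ x : ℝ, cexp (s / 2 * x - ρ * x ^ 2) * Psi (rexp x) := by
  rw [Xi, integral_Ioi_zero_eq_integral_exp_smul]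
  congr 1 with x
  have h_exp : cexp x * cexp (x * (s / 2 - 1)) * cexp ((-ρ * x ^ 2 : ℝ) : ℂ)
      = cexp (s / 2 * x - ρ * x ^ 2) := by
    rw [← Complex.exp_add, ← Complex.exp_add]
    push_cast
    ring_nf
  rw [log_exp, Complex.real_smul, Complex.ofReal_exp,
    Complex.cpow_def_of_ne_zero (Complex.exp_ne_zero _),
    Complex.log_exp (by simpa using pi_pos) (by simp [pi_pos.le]), Complex.ofReal_exp]
  linear_combination (Psi (rexp x) : ℂ) * h_exp

lemma cexp_mul_psi_exp_neg (ρ : ℝ) (s : ℂ) (x : ℝ) :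
    cexp ((1 - s) / 2 * ((-x : ℝ) : ℂ) - ρ * ((-x : ℝ) : ℂ) ^ 2) * Psi (rexp (-x))
      = cexp (s / 2 * x - ρ * x ^ 2) * Psi (rexp x)
        + 1 / 2 * (cexp (s / 2 * x - ρ * x ^ 2) - cexp ((s - 1) / 2 * x - ρ * x ^ 2)) := by
  have h_shift : cexp (s / 2 * x - ρ * x ^ 2)
      = cexp ((s - 1) / 2 * x - ρ * x ^ 2) * (rexp (x / 2) : ℂ) := by
    rw [Complex.ofReal_exp, ← Complex.exp_add]
    push_cast
    ring_nf
  rw [psi_exp_neg, h_shift]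
  push_cast
  ring_nf

lemma Xi_one_sub {ρ : ℝ} (hρ : 0 < ρ) (s : ℂ) :
    Xi ρ (1 - s) = Xi ρ s + 1 / 2 * ((∫ x : ℝ, cexp (s / 2 * x - ρ * x ^ 2))
      - ∫ x : ℝ, cexp ((s - 1) / 2 * x - ρ * x ^ 2)) := by
  have hs := integrable_cexp_mul_sub_mul_sq hρ (s / 2)
  have hs₁ := integrable_cexp_mul_sub_mul_sq hρ ((s - 1) / 2)
  rw [Xi_eq_integral, Xi_eq_integral, ← integral_neg_eq_self]
  simp only [cexp_mul_psi_exp_neg]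
  rw [integral_add (integrable_cexp_mul_sub_mul_sq_mul_psi hρ _) ?_, integral_const_mul,
    integral_sub hs hs₁]
  exact (hs.sub hs₁).const_mul _

theorem stmt2 (ρ : ℝ) (hρ : 0 < ρ) (s : ℂ) :
    Xi ρ s - Xi ρ (1 - s)
      = (1/2) * (Real.sqrt (Real.pi / ρ) : ℂ) *
        (Complex.exp ((s - 1) ^ 2 / (16 * (ρ : ℂ))) - Complex.exp (s ^ 2 / (16 * (ρ : ℂ)))) := by
  have h_sq (z : ℂ) : (z / 2) ^ 2 / (4 * ρ) = z ^ 2 / (16 * ρ) := by ring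
  rw [Xi_one_sub hρ, integral_cexp_mul_sub_mul_sq hρ, integral_cexp_mul_sub_mul_sq hρ, h_sq,
    h_sq]
  ring
end

section
/- Let ρ₁₁, ρ₂₂ > 0 with ρ₁₁ρ₂₂ - ρ₁₂² > 0 (ρ real symmetric 2×2 positive definite), and let Ψ be a measurable function on (0,∞) such that all integrals below converge absolutely. Then ∫_{-∞}^∞ M[Ψ·e^{-ρ₂₂ log²(·)}](s₂/2 + 2(ρ₂₂-ρ₁₂)x) · exp(-(ρ₁₁+ρ₂₂-2ρ₁₂)x² + ((s₁-s₂)/2)x) dx = √(π/(ρ₁₁+ρ₂₂-2ρ₁₂)) · exp((s₁-s₂)²/(16(ρ₁₁+ρ₂₂-2ρ₁₂))) · M[Ψ·e^{-D log²(·)}]( (s₁ρ₂₂ + s₂ρ₁₁ - (s₁+s₂)ρ₁₂) / (2(ρ₁₁+ρ₂₂-2ρ₁₂)) ), where D = (ρ₁₁ρ₂₂-ρ₁₂²)/(ρ₁₁+ρ₂₂-2ρ₁₂). -/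
/-!
For `t > 0` write `t ^ (σ + c x) = t ^ σ · exp (c x log t)`. Then the integrand
`t ^ (σ + c x - 1) Ψ(t) e^{-ρ log² t} · e^{-A x² + a x}` of the double integral is, for fixed `t`,
a Gaussian in `x` with linear coefficient `c log t + a`. Integrating in `x` first and completing
the square yields `√(π/A) e^{a²/4A} · t ^ (σ + ca/2A - 1) Ψ(t) e^{-(ρ - c²/4A) log² t}`, i.e. the
Mellin integrand with a shifted argument and a smaller Gaussian weight. The theorem is the case
`σ = s₂/2`, `c = 2(ρ₂₂ - ρ₁₂)`, `A = ρ₁₁ + ρ₂₂ - 2ρ₁₂`, `a = (s₁ - s₂)/2`, for which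
`ρ₂₂ - c²/4A = (ρ₁₁ρ₂₂ - ρ₁₂²)/A`.
-/

open MeasureTheory Real

/-- Mellin transform of `f · exp(-ρ log²(·))` at `σ`. -/
noncomputable def MellinG (f : ℝ → ℝ) (ρ : ℝ) (σ : ℂ) : ℂ :=
  ∫ t in Set.Ioi (0:ℝ), (t : ℂ) ^ (σ - 1) * (f t : ℂ) * (Real.exp (-ρ * Real.log t ^ 2) : ℂ)

noncomputable def gaussMellinKernel (Ψ : ℝ → ℝ) (ρ A c : ℝ) (σ a : ℂ) (x t : ℝ) : ℂ :=
  Ψ t * Complex.exp (-A * x ^ 2 + (c * Real.log t + a) * x +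
    ((σ - 1) * Real.log t - ρ * Real.log t ^ 2))

section GaussMellinKernel

open Complex

lemma ofReal_cpow_mul_exp_log_sq_eq {t : ℝ} (ht : 0 < t) (s : ℂ) (ρ y : ℝ) :
    (t : ℂ) ^ (s - 1) * y * (rexp (-ρ * Real.log t ^ 2) : ℂ) =
      y * cexp ((s - 1) * Real.log t - ρ * Real.log t ^ 2) := by
  rw [cpow_def_of_ne_zero (ofReal_ne_zero.mpr ht.ne'), ← ofReal_log ht.le, ofReal_exp,
    mul_right_comm, ← Complex.exp_add, mul_comm]
  push_cast
  ring_nf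

variable (Ψ : ℝ → ℝ) (ρ c : ℝ) (σ a : ℂ) {A : ℝ}

lemma cpow_mul_exp_log_sq_mul_cexp_eq_gaussMellinKernel {t : ℝ} (ht : 0 < t) (x : ℝ) :
    (t : ℂ) ^ (σ + c * x - 1) * Ψ t * (rexp (-ρ * Real.log t ^ 2) : ℂ) *
        cexp (-A * x ^ 2 + a * x) =
      gaussMellinKernel Ψ ρ A c σ a x t := by
  rw [ofReal_cpow_mul_exp_log_sq_eq ht, mul_assoc, ← Complex.exp_add, gaussMellinKernel]
  ring_nf

lemma integral_gaussMellinKernel (hA : 0 < A) {t : ℝ} (ht : 0 < t) :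
    ∫ x, gaussMellinKernel Ψ ρ A c σ a x t =
      √(π / A) * cexp (a ^ 2 / (4 * A)) * ((t : ℂ) ^ (σ + c * a / (2 * A) - 1) * Ψ t *
        (rexp (-(ρ - c ^ 2 / (4 * A)) * Real.log t ^ 2) : ℂ)) := by
  have hA' : (A : ℂ) ≠ 0 := ofReal_ne_zero.mpr hA.ne'
  have hsquare :
      (σ - 1) * Real.log t - ρ * Real.log t ^ 2 - (c * Real.log t + a) ^ 2 / (4 * -A) =
        a ^ 2 / (4 * A) +
          ((σ + c * a / (2 * A) - 1) * Real.log t - (ρ - c ^ 2 / (4 * A)) * Real.log t ^ 2) := by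
    field_simp
    ring
  rw [ofReal_cpow_mul_exp_log_sq_eq ht]
  simp only [gaussMellinKernel]
  rw [integral_const_mul, integral_cexp_quadratic (by simpa using hA), neg_neg, hsquare,
    Complex.exp_add, sqrt_eq_rpow, ofReal_cpow (by positivity)]
  push_cast
  ring

lemma norm_gaussMellinKernel (x t : ℝ) :
    (‖gaussMellinKernel Ψ ρ A c σ a x t‖ : ℂ) =
      gaussMellinKernel (fun t ↦ |Ψ t|) ρ A c σ.re a.re x t := by
  simp only [gaussMellinKernel, norm_mul, norm_exp, norm_real, Real.norm_eq_abs]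
  push_cast
  congr 2
  apply Complex.ext <;> simp [← ofReal_pow]

lemma measurable_gaussMellinKernel (hΨ : Measurable Ψ) :
    Measurable (Function.uncurry (gaussMellinKernel Ψ ρ A c σ a)) := by
  unfold gaussMellinKernel
  fun_prop

-- By `norm_gaussMellinKernel`, the `x`-integral of the modulus is again a Gaussian integral.
lemma integral_norm_gaussMellinKernel (hA : 0 < A) {t : ℝ} (ht : 0 < t) :
    ∫ x, ‖gaussMellinKernel Ψ ρ A c σ a x t‖ =
      ‖(√(π / A) : ℂ) * cexp (a.re ^ 2 / (4 * A))‖ *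
        ‖(t : ℂ) ^ (σ + c * a / (2 * A) - 1) * Ψ t *
          (rexp (-(ρ - c ^ 2 / (4 * A)) * Real.log t ^ 2) : ℂ)‖ := by
  have h := integral_gaussMellinKernel (fun t ↦ |Ψ t|) ρ c σ.re a.re hA ht
  simp_rw [← norm_gaussMellinKernel, integral_complex_ofReal] at h
  have hre : (c * a / (2 * A) : ℂ).re = (c * a.re / (2 * A) : ℂ).re := by
    simp only [← ofReal_ofNat, ← ofReal_mul, div_ofReal_re, re_ofReal_mul, ofReal_re]
  rw [← abs_of_nonneg (integral_nonneg fun _ ↦ norm_nonneg _), ← Real.norm_eq_abs,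
    ← Complex.norm_real, h]
  simp [norm_cpow_eq_rpow_re_of_pos ht, hre]

lemma integrable_gaussMellinKernel (hA : 0 < A) (hΨ : Measurable Ψ)
    (h : IntegrableOn (fun t : ℝ ↦ (t : ℂ) ^ (σ + c * a / (2 * A) - 1) * Ψ t *
        (rexp (-(ρ - c ^ 2 / (4 * A)) * Real.log t ^ 2) : ℂ)) (Set.Ioi 0)) :
    Integrable (Function.uncurry (gaussMellinKernel Ψ ρ A c σ a))
      (volume.prod (volume.restrict (Set.Ioi 0))) := by
  rw [integrable_prod_iff' (measurable_gaussMellinKernel Ψ ρ c σ a hΨ).aestronglyMeasurable]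
  refine ⟨.of_forall fun t ↦ ?_, ?_⟩
  · simp only [Function.uncurry_apply_pair, gaussMellinKernel]
    exact (integrable_cexp_quadratic (b := A) (by simpa using hA) _ _).const_mul _
  · refine (h.norm.const_mul ‖(√(π / A) : ℂ) * cexp (a.re ^ 2 / (4 * A))‖).congr ?_
    filter_upwards [self_mem_ae_restrict measurableSet_Ioi] with t ht
    exact (integral_norm_gaussMellinKernel Ψ ρ c σ a hA ht).symm

theorem integral_mellinG_mul_cexp_quadratic (hA : 0 < A) (hΨ : Measurable Ψ)
    (h : IntegrableOn (fun t : ℝ ↦ (t : ℂ) ^ (σ + c * a / (2 * A) - 1) * Ψ t *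
        (rexp (-(ρ - c ^ 2 / (4 * A)) * Real.log t ^ 2) : ℂ)) (Set.Ioi 0)) :
    ∫ x : ℝ, MellinG Ψ ρ (σ + c * x) * cexp (-A * x ^ 2 + a * x) =
      √(π / A) * cexp (a ^ 2 / (4 * A)) *
        MellinG Ψ (ρ - c ^ 2 / (4 * A)) (σ + c * a / (2 * A)) := by
  calc ∫ x : ℝ, MellinG Ψ ρ (σ + c * x) * cexp (-A * x ^ 2 + a * x)
      = ∫ x : ℝ, ∫ t in Set.Ioi 0, gaussMellinKernel Ψ ρ A c σ a x t := by
        refine integral_congr_ae (.of_forall fun x ↦ ?_)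
        simp only [MellinG, ← integral_mul_const]
        exact setIntegral_congr_fun measurableSet_Ioi fun t ht ↦
          cpow_mul_exp_log_sq_mul_cexp_eq_gaussMellinKernel Ψ ρ c σ a ht x
    _ = ∫ t in Set.Ioi 0, ∫ x : ℝ, gaussMellinKernel Ψ ρ A c σ a x t :=
        integral_integral_swap (integrable_gaussMellinKernel Ψ ρ c σ a hA hΨ h)
    _ = ∫ t in Set.Ioi (0 : ℝ), √(π / A) * cexp (a ^ 2 / (4 * A)) *
          ((t : ℂ) ^ (σ + c * a / (2 * A) - 1) * Ψ t *
            (rexp (-(ρ - c ^ 2 / (4 * A)) * Real.log t ^ 2) : ℂ)) :=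
        setIntegral_congr_fun measurableSet_Ioi fun t ht ↦
          integral_gaussMellinKernel Ψ ρ c σ a hA ht
    _ = _ := integral_const_mul _ _

end GaussMellinKernel

lemma add_sub_two_mul_pos_of_mul_sub_sq_pos {a b c : ℝ} (ha : 0 < a) (h : 0 < a * c - b ^ 2) :
    0 < a + c - 2 * b :=
  pos_of_mul_pos_right (by nlinarith [sq_nonneg (a - b)] : 0 < a * (a + c - 2 * b)) ha.le

theorem stmt8_general (ρ11 ρ12 ρ22 : ℝ) (h11 : 0 < ρ11)
    (hdet : 0 < ρ11 * ρ22 - ρ12 ^ 2) (Ψ : ℝ → ℝ) (hmeas : Measurable Ψ) (s₁ s₂ : ℂ)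
    (hrhs : IntegrableOn
      (fun t : ℝ => (t : ℂ) ^ (((s₁ * ρ22 + s₂ * ρ11 - (s₁ + s₂) * ρ12) /
          (2 * ((ρ11 : ℂ) + ρ22 - 2 * ρ12))) - 1) * (Ψ t : ℂ) *
        (Real.exp (-((ρ11 * ρ22 - ρ12 ^ 2) / (ρ11 + ρ22 - 2 * ρ12)) * Real.log t ^ 2) : ℂ))
      (Set.Ioi 0)) :
    (∫ x : ℝ, MellinG Ψ ρ22 (s₂ / 2 + 2 * ((ρ22 : ℂ) - ρ12) * (x : ℂ)) *
        Complex.exp (-((ρ11 : ℂ) + ρ22 - 2 * ρ12) * (x : ℂ) ^ 2 + ((s₁ - s₂) / 2) * (x : ℂ)))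
      = (Real.sqrt (Real.pi / (ρ11 + ρ22 - 2 * ρ12)) : ℂ) *
        Complex.exp ((s₁ - s₂) ^ 2 / (16 * ((ρ11 : ℂ) + ρ22 - 2 * ρ12))) *
        MellinG Ψ ((ρ11 * ρ22 - ρ12 ^ 2) / (ρ11 + ρ22 - 2 * ρ12))
          ((s₁ * ρ22 + s₂ * ρ11 - (s₁ + s₂) * ρ12) / (2 * ((ρ11 : ℂ) + ρ22 - 2 * ρ12))) := by
  have hA := add_sub_two_mul_pos_of_mul_sub_sq_pos h11 hdet
  set A := ρ11 + ρ22 - 2 * ρ12 with hAdef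
  have hAC : ((ρ11 : ℂ) + ρ22 - 2 * ρ12) = A := by rw [hAdef]; push_cast; ring
  have hA' : (A : ℂ) ≠ 0 := Complex.ofReal_ne_zero.mpr hA.ne'
  have hD : (ρ11 * ρ22 - ρ12 ^ 2) / A = ρ22 - (2 * (ρ22 - ρ12)) ^ 2 / (4 * A) := by
    field_simp
    ring
  have hσ : (s₁ * ρ22 + s₂ * ρ11 - (s₁ + s₂) * ρ12) / (2 * (A : ℂ)) =
      s₂ / 2 + ((2 * (ρ22 - ρ12) : ℝ) : ℂ) * ((s₁ - s₂) / 2) / (2 * A) := by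
    field_simp
    rw [← hAC]
    push_cast
    ring
  have hexp : (s₁ - s₂) ^ 2 / (16 * (A : ℂ)) = ((s₁ - s₂) / 2) ^ 2 / (4 * A) := by
    field_simp
    ring
  rw [hAC, hD, hσ] at hrhs ⊢
  rw [hexp]
  exact_mod_cast integral_mellinG_mul_cexp_quadratic Ψ ρ22 (2 * (ρ22 - ρ12)) (s₂ / 2)
    ((s₁ - s₂) / 2) hA hmeas hrhs

theorem stmt8 (ρ11 ρ12 ρ22 : ℝ) (h11 : 0 < ρ11) (h22 : 0 < ρ22)
    (hdet : 0 < ρ11 * ρ22 - ρ12 ^ 2) (Ψ : ℝ → ℝ) (hmeas : Measurable Ψ) (s₁ s₂ : ℂ)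
    (hinner : ∀ x : ℝ, IntegrableOn
      (fun t : ℝ => (t : ℂ) ^ ((s₂ / 2 + 2 * ((ρ22 : ℂ) - ρ12) * (x : ℂ)) - 1) * (Ψ t : ℂ) *
        (Real.exp (-ρ22 * Real.log t ^ 2) : ℂ)) (Set.Ioi 0))
    (houter : Integrable (fun x : ℝ =>
      MellinG Ψ ρ22 (s₂ / 2 + 2 * ((ρ22 : ℂ) - ρ12) * (x : ℂ)) *
        Complex.exp (-((ρ11 : ℂ) + ρ22 - 2 * ρ12) * (x : ℂ) ^ 2 + ((s₁ - s₂) / 2) * (x : ℂ))))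
    (hrhs : IntegrableOn
      (fun t : ℝ => (t : ℂ) ^ (((s₁ * ρ22 + s₂ * ρ11 - (s₁ + s₂) * ρ12) /
          (2 * ((ρ11 : ℂ) + ρ22 - 2 * ρ12))) - 1) * (Ψ t : ℂ) *
        (Real.exp (-((ρ11 * ρ22 - ρ12 ^ 2) / (ρ11 + ρ22 - 2 * ρ12)) * Real.log t ^ 2) : ℂ))
      (Set.Ioi 0)) :
    (∫ x : ℝ, MellinG Ψ ρ22 (s₂ / 2 + 2 * ((ρ22 : ℂ) - ρ12) * (x : ℂ)) *
        Complex.exp (-((ρ11 : ℂ) + ρ22 - 2 * ρ12) * (x : ℂ) ^ 2 + ((s₁ - s₂) / 2) * (x : ℂ)))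
      = (Real.sqrt (Real.pi / (ρ11 + ρ22 - 2 * ρ12)) : ℂ) *
        Complex.exp ((s₁ - s₂) ^ 2 / (16 * ((ρ11 : ℂ) + ρ22 - 2 * ρ12))) *
        MellinG Ψ ((ρ11 * ρ22 - ρ12 ^ 2) / (ρ11 + ρ22 - 2 * ρ12))
          ((s₁ * ρ22 + s₂ * ρ11 - (s₁ + s₂) * ρ12) / (2 * ((ρ11 : ℂ) + ρ22 - 2 * ρ12))) :=
  stmt8_general ρ11 ρ12 ρ22 h11 hdet Ψ hmeas s₁ s₂ hrhs
end
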